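/- arXiv:1903.07327 — 3 statements merged into one kernel-verified Lean document; each statement's English description precedes it below -/
import Mathlib

section
/- Let β be a multi-index and let u, F : (0,T)×ℝ^N → ℝ be such that: u(t,·) ∈ C^∞(ℝ^N) for every t; ∂_x^β F and all functions ∂_{x_i}∂_{x_j}∂_x^β u (i,j = 1,…,N) belong to L²((0,T)×K) for every compact K; and for a.e. x ∈ ℝ^N the map t ↦ ∂_x^β u(t,x) is absolutely continuous on [0,T] with derivative Σ_{i,j=1}^N a_{ij}(t)∂_{x_i}∂_{x_j}∂_x^β u(t,x) − ∂_x^β F(t,x) for a.e. t (i.e. the differentiated equation ∂_t ∂^β u = ∂^β(ℒu + ∂_t u) − ... holds, u being a strong solution of ℒu = F). Then there is a constant c = c(N,ν) such that for every ζ ∈ C_c^∞(ℝ^N) and all 0 ≤ t₁ < t₂ ≤ T: ∫_{ℝ^N} ζ(x)² ( ∂_x^β u(t₂,x) − ∂_x^β u(t₁,x) )² dx ≤ c |t₂ − t₁| ( ‖ζ ∂_x^β F‖²_{L²((0,T)×ℝ^N)} + Σ_{i,j=1}^N ‖ζ ∂_{x_i}∂_{x_j}∂_x^β u‖²_{L²((0,T)×ℝ^N)}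 ). -/
open MeasureTheory Set
open scoped ENNReal

noncomputable section

/-- The space-time measure on `(0,T) × ℝ^N`. -/
def stMeasure (N : ℕ) (T : ℝ) : Measure (ℝ × (Fin N → ℝ)) :=
  (volume.restrict (Set.Ioo 0 T)).prod volume

/-- The space-time measure on `(0,T) × K`. -/
def stMeasureK (N : ℕ) (T : ℝ) (K : Set (Fin N → ℝ)) : Measure (ℝ × (Fin N → ℝ)) :=
  (volume.restrict (Set.Ioo 0 T)).prod (volume.restrict K)

/-- Iterated (classical) spatial partial derivative along a list of coordinate directions:
`iterPD [i₁,…,iₘ] f = ∂_{i₁} ⋯ ∂_{iₘ} f`. -/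
def iterPD {N : ℕ} : List (Fin N) → ((Fin N → ℝ) → ℝ) → ((Fin N → ℝ) → ℝ)
  | [], f => f
  | i :: L, f => fun x => fderiv ℝ (iterPD L f) x (Pi.single i 1)

/-- Iterated spatial partial derivative of a function of `(t,x)`, in the `x` variables. -/
def iterPDx {N : ℕ} (L : List (Fin N)) (f : ℝ × (Fin N → ℝ) → ℝ) : ℝ × (Fin N → ℝ) → ℝ :=
  fun p => iterPD L (fun x => f (p.1, x)) p.2

/-- A test function on `(0,T) × ℝ^N`: smooth, compactly supported, with support in `(0,T) × ℝ^N`. -/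
structure IsSTTest (N : ℕ) (T : ℝ) (φ : ℝ × (Fin N → ℝ) → ℝ) : Prop where
  smooth : ContDiff ℝ (⊤ : ℕ∞) φ
  compSupp : HasCompactSupport φ
  timeSupp : ∀ p : ℝ × (Fin N → ℝ), p.1 ∉ Set.Ioo 0 T → φ p = 0

/-- `g` is the weak spatial derivative `∂_x^L u` on `(0,T) × ℝ^N`. -/
def IsWeakDerivX (N : ℕ) (T : ℝ) (L : List (Fin N)) (u g : ℝ × (Fin N → ℝ) → ℝ) : Prop :=
  ∀ φ, IsSTTest N T φ →
    ∫ p, u p * iterPDx L φ p ∂(stMeasure N T)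
      = (-1 : ℝ) ^ L.length * ∫ p, g p * φ p ∂(stMeasure N T)

/-- `g` is the weak time derivative `∂_t u` on `(0,T) × ℝ^N`. -/
def IsWeakDerivT (N : ℕ) (T : ℝ) (u g : ℝ × (Fin N → ℝ) → ℝ) : Prop :=
  ∀ φ, IsSTTest N T φ →
    ∫ p, u p * deriv (fun s => φ (s, p.2)) p.1 ∂(stMeasure N T)
      = - ∫ p, g p * φ p ∂(stMeasure N T)

/-- `f ∈ L²((0,T), L²_loc(ℝ^N))`. -/
def MemL2loc (N : ℕ) (T : ℝ) (f : ℝ × (Fin N → ℝ) → ℝ) : Prop :=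
  ∀ K : Set (Fin N → ℝ), IsCompact K → MemLp f 2 (stMeasureK N T K)

/-- `u ∈ W^{1,2}((0,T), L²_loc(ℝ^N))`, with weak time derivative `ut`. -/
def MemW12loc (N : ℕ) (T : ℝ) (u ut : ℝ × (Fin N → ℝ) → ℝ) : Prop :=
  IsWeakDerivT N T u ut ∧ MemL2loc N T u ∧ MemL2loc N T ut

/-- The continuous-in-time representative of `u` vanishes at `t = 0`: a.e. one has
`u(t,x) = ∫_0^t ∂_t u(s,x) ds`. -/
def VanishesAtZero (N : ℕ) (T : ℝ) (u ut : ℝ × (Fin N → ℝ) → ℝ) : Prop :=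
  ∀ᵐ p ∂ stMeasure N T, u p = ∫ s in Set.Ioo 0 p.1, ut (s, p.2)

/-- Measurable, symmetric, uniformly elliptic coefficients depending only on time. -/
def IsElliptic (N : ℕ) (T ν : ℝ) (a : ℝ → Fin N → Fin N → ℝ) : Prop :=
  (∀ i j, Measurable fun t => a t i j) ∧
  (∀ᵐ t ∂ volume.restrict (Set.Ioo 0 T),
    (∀ i j, a t i j = a t j i) ∧
    (∀ ξ : Fin N → ℝ,
      ν * ∑ i, ξ i ^ 2 ≤ ∑ i, ∑ j, a t i j * ξ i * ξ j ∧
      ∑ i, ∑ j, a t i j * ξ i * ξ j ≤ ν⁻¹ * ∑ i, ξ i ^ 2))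

/-- `u` is a weak solution of `ℒu = Σ aᵢⱼ(t) ∂ᵢ∂ⱼu − ∂_t u = F` on `(0,T) × ℝ^N`,
where `ut` is the weak time derivative of `u`. -/
def IsWeakSolution (N : ℕ) (T : ℝ) (a : ℝ → Fin N → Fin N → ℝ)
    (u ut F : ℝ × (Fin N → ℝ) → ℝ) : Prop :=
  ∀ φ : (Fin N → ℝ) → ℝ, ContDiff ℝ (⊤ : ℕ∞) φ → HasCompactSupport φ →
    ∀ᵐ t ∂ volume.restrict (Set.Ioo 0 T),
      (∫ x, (-(ut (t, x)) * φ x + ∑ i, ∑ j, a t i j * u (t, x) * iterPD [i, j] φ x))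
        = ∫ x, F (t, x) * φ x

/-- `ζ ≺ ζ₁`: cutoff functions with `0 ≤ ζ ≤ ζ₁ ≤ 1` and `ζ₁ = 1` on the support of `ζ`. -/
def IsCutoffPair (N : ℕ) (ζ ζ₁ : (Fin N → ℝ) → ℝ) : Prop :=
  ContDiff ℝ (⊤ : ℕ∞) ζ ∧ HasCompactSupport ζ ∧ ContDiff ℝ (⊤ : ℕ∞) ζ₁ ∧ HasCompactSupport ζ₁ ∧
  (∀ x, 0 ≤ ζ x) ∧ (∀ x, ζ x ≤ ζ₁ x) ∧ (∀ x, ζ₁ x ≤ 1) ∧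
  (∀ x ∈ tsupport ζ, ζ₁ x = 1)

/-- The norm `‖·‖_{L²((0,T),W^{k,2}(ℝ^N))}` computed from a family `D` of (weak) derivatives,
`D L` being the derivative `∂_x^L`: the square root of the sum of the squares of the `L²`
norms of all derivatives of order `≤ k`. -/
def sobNorm (N : ℕ) (T : ℝ) (k : ℕ) (D : List (Fin N) → (ℝ × (Fin N → ℝ) → ℝ)) : ℝ≥0∞ :=
  (∑ m ∈ Finset.range (k + 1), ∑ v : Fin m → Fin N,
    eLpNorm (D (List.ofFn v)) 2 (stMeasure N T) ^ 2) ^ (1 / 2 : ℝ)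

/-- The finite difference operator `Δ_{h,i} f(t,x) = f(t, x + h eᵢ) − f(t,x)`. -/
def stepDiff (N : ℕ) (h : ℝ) (i : Fin N) (f : ℝ × (Fin N → ℝ) → ℝ) : ℝ × (Fin N → ℝ) → ℝ :=
  fun p => f (p.1, p.2 + h • (Pi.single i 1 : Fin N → ℝ)) - f p

/-- The finite-difference seminorm
`sup { ‖Δ_{h,i}^j f‖_{L²((0,T)×ℝ^N)} / |h|^j : i, 0 < |h| ≤ 1 }`. -/
def diffSem (N : ℕ) (T : ℝ) (j : ℕ) (f : ℝ × (Fin N → ℝ) → ℝ) : ℝ≥0∞ :=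
  ⨆ (i : Fin N) (h : ℝ) (_ : 0 < |h| ∧ |h| ≤ 1),
    eLpNorm ((stepDiff N h i)^[j] f) 2 (stMeasure N T) / ENNReal.ofReal (|h| ^ j)

/-- The heat-type operator `ℒu = Σ aᵢⱼ(t) ∂ᵢ∂ⱼ u − ∂_t u`, expressed through given
functions `ut` (time derivative) and `uxx i j` (second spatial derivatives `∂ᵢ∂ⱼu`). -/
def heatOp (N : ℕ) (a : ℝ → Fin N → Fin N → ℝ) (ut : ℝ × (Fin N → ℝ) → ℝ)
    (uxx : Fin N → Fin N → ℝ × (Fin N → ℝ) → ℝ) : ℝ × (Fin N → ℝ) → ℝ :=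
  fun p => (∑ i, ∑ j, a p.1 i j * uxx i j p) - ut p


/-- Cauchy–Schwarz for integrals on a finite measure. -/
lemma cs_integral {α : Type*} [MeasurableSpace α] {μ : Measure α} [IsFiniteMeasure μ]
    {f : α → ℝ} (hm : AEStronglyMeasurable f μ) (h2 : Integrable (fun s => f s ^ 2) μ) :
    (∫ s, f s ∂μ) ^ 2 ≤ (μ Set.univ).toReal * ∫ s, f s ^ 2 ∂μ := by
  have hf : Integrable f μ := ((memLp_two_iff_integrable_sq hm).2 h2).integrable one_le_two
  have i1 : Integrable (fun z : α × α => f z.1 ^ 2) (μ.prod μ) := by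
    simpa using h2.mul_prod (integrable_const (1 : ℝ))
  have i2 : Integrable (fun z : α × α => f z.2 ^ 2) (μ.prod μ) := by
    simpa using (integrable_const (1 : ℝ)).mul_prod h2
  have i3 : Integrable (fun z : α × α => f z.1 * f z.2) (μ.prod μ) := hf.mul_prod hf
  have key : 0 ≤ ∫ z : α × α, (f z.1 - f z.2) ^ 2 ∂(μ.prod μ) :=
    integral_nonneg fun z => sq_nonneg _
  have expand : ∫ z : α × α, (f z.1 - f z.2) ^ 2 ∂(μ.prod μ)
      = ∫ z : α × α, (f z.1 ^ 2 + f z.2 ^ 2 - 2 * (f z.1 * f z.2)) ∂(μ.prod μ) := by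
    congr 1; funext z; ring
  have hadd : Integrable (fun z : α × α => f z.1 ^ 2 + f z.2 ^ 2) (μ.prod μ) := by
    exact i1.add i2
  have hmul : Integrable (fun z : α × α => 2 * (f z.1 * f z.2)) (μ.prod μ) := by
    exact i3.const_mul 2
  rw [expand, integral_sub hadd hmul, integral_add i1 i2, integral_const_mul] at key
  have e1 : ∫ z : α × α, f z.1 ^ 2 ∂(μ.prod μ) = (∫ s, f s ^ 2 ∂μ) * (μ Set.univ).toReal := by
    simpa [measureReal_def] using integral_prod_mul (μ := μ) (ν := μ) (fun s => f s ^ 2) (fun _ => (1 : ℝ))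
  have e2 : ∫ z : α × α, f z.2 ^ 2 ∂(μ.prod μ) = (μ Set.univ).toReal * ∫ s, f s ^ 2 ∂μ := by
    simpa [measureReal_def] using integral_prod_mul (μ := μ) (ν := μ) (fun _ => (1 : ℝ)) (fun s => f s ^ 2)
  have e3 : ∫ z : α × α, f z.1 * f z.2 ∂(μ.prod μ) = (∫ s, f s ∂μ) ^ 2 := by
    rw [integral_prod_mul]; ring
  rw [e1, e2, e3] at key
  nlinarith [key]

lemma quad_single {N : ℕ} (a : Fin N → Fin N → ℝ) (i : Fin N) :
    ∑ i', ∑ j', a i' j' * (Pi.single i 1 : Fin N → ℝ) i' * (Pi.single i 1 : Fin N → ℝ) j' = a i i := by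
  simp [Pi.single_apply, mul_ite, ite_mul, Finset.sum_ite_eq]

lemma sq_single {N : ℕ} (i : Fin N) : ∑ k, ((Pi.single i 1 : Fin N → ℝ) k) ^ 2 = 1 := by
  simp [Pi.single_apply, sq, mul_ite, ite_mul, Finset.sum_ite_eq]

lemma quad_pair {N : ℕ} (a : Fin N → Fin N → ℝ) {i j : Fin N} (hij : i ≠ j) (c : ℝ) :
    ∑ i', ∑ j', a i' j' * (fun k => (Pi.single i 1 : Fin N → ℝ) k + c * (Pi.single j 1 : Fin N → ℝ) k) i'
      * (fun k => (Pi.single i 1 : Fin N → ℝ) k + c * (Pi.single j 1 : Fin N → ℝ) k) j'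
      = a i i + c * a i j + c * a j i + c ^ 2 * a j j := by
  simp only [Pi.single_apply, mul_add, add_mul, mul_ite, ite_mul, mul_one, one_mul, mul_zero,
    zero_mul, Finset.sum_add_distrib, Finset.sum_ite_eq, Finset.mem_univ, if_true]
  simp [Finset.sum_add_distrib, Finset.sum_ite_eq, sq]
  ring

lemma sq_pair {N : ℕ} {i j : Fin N} (hij : i ≠ j) (c : ℝ) :
    ∑ k, ((fun k => (Pi.single i 1 : Fin N → ℝ) k + c * (Pi.single j 1 : Fin N → ℝ) k) k) ^ 2 = 1 + c ^ 2 := by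
  simp only [Pi.single_apply, add_sq, mul_pow, one_pow, mul_one]
  simp [Finset.sum_add_distrib, mul_ite, ite_mul, Finset.sum_ite_eq, hij, hij.symm, sq]

lemma entry_bound {N : ℕ} {ν : ℝ} (hν : 0 < ν) {a : Fin N → Fin N → ℝ}
    (hsym : ∀ i j, a i j = a j i)
    (hQ : ∀ ξ : Fin N → ℝ, ν * ∑ i, ξ i ^ 2 ≤ ∑ i, ∑ j, a i j * ξ i * ξ j ∧
       ∑ i, ∑ j, a i j * ξ i * ξ j ≤ ν⁻¹ * ∑ i, ξ i ^ 2) :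
    ∀ i j, |a i j| ≤ ν⁻¹ := by
  have hν' : (0:ℝ) < ν⁻¹ := inv_pos.2 hν
  have hdiag : ∀ i, ν ≤ a i i ∧ a i i ≤ ν⁻¹ := by
    intro i
    have h := hQ (Pi.single i 1 : Fin N → ℝ)
    rw [quad_single, sq_single, mul_one, mul_one] at h
    exact h
  intro i j
  by_cases hij : i = j
  · subst hij
    exact abs_le.2 ⟨by linarith [(hdiag i).1], (hdiag i).2⟩
  · have h1 := (hQ (fun k => (Pi.single i 1 : Fin N → ℝ) k
      + (1:ℝ) * (Pi.single j 1 : Fin N → ℝ) k)).2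
    rw [quad_pair a hij 1, sq_pair hij 1] at h1
    have h2 := (hQ (fun k => (Pi.single i 1 : Fin N → ℝ) k
      + (-1:ℝ) * (Pi.single j 1 : Fin N → ℝ) k)).2
    rw [quad_pair a hij (-1), sq_pair hij (-1)] at h2
    have hs := hsym i j
    have d1 := (hdiag i).1
    have d2 := (hdiag j).1
    rw [abs_le]
    constructor <;> nlinarith [h1, h2, d1, d2, hν, hν']

lemma quad_sq_bound {N : ℕ} {ν : ℝ} (hν : 0 < ν) {a : Fin N → Fin N → ℝ}
    (hb : ∀ i j, |a i j| ≤ ν⁻¹) (b : Fin N → Fin N → ℝ) :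
    (∑ i, ∑ j, a i j * b i j) ^ 2 ≤ (N:ℝ)^2 * (ν⁻¹)^2 * ∑ i, ∑ j, b i j ^ 2 := by
  have e1 : ∑ i, ∑ j, a i j * b i j
      = ∑ p : Fin N × Fin N, a p.1 p.2 * b p.1 p.2 := by
    rw [← Finset.univ_product_univ, Finset.sum_product]
  have e2 : ∑ i, ∑ j, b i j ^ 2 = ∑ p : Fin N × Fin N, b p.1 p.2 ^ 2 := by
    rw [← Finset.univ_product_univ, Finset.sum_product]
  rw [e1, e2]
  calc (∑ p : Fin N × Fin N, a p.1 p.2 * b p.1 p.2) ^ 2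
      ≤ (∑ p : Fin N × Fin N, a p.1 p.2 ^ 2) * ∑ p : Fin N × Fin N, b p.1 p.2 ^ 2 :=
        Finset.sum_mul_sq_le_sq_mul_sq _ _ _
    _ ≤ ((N:ℝ)^2 * (ν⁻¹)^2) * ∑ p : Fin N × Fin N, b p.1 p.2 ^ 2 := by
        apply mul_le_mul_of_nonneg_right _ (Finset.sum_nonneg fun p _ => sq_nonneg _)
        calc ∑ p : Fin N × Fin N, a p.1 p.2 ^ 2
            ≤ ∑ _p : Fin N × Fin N, (ν⁻¹)^2 := by
              apply Finset.sum_le_sum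
              intro p _
              exact sq_le_sq' (by linarith [(abs_le.1 (hb p.1 p.2)).1]) (abs_le.1 (hb p.1 p.2)).2
          _ = ((N:ℝ)^2 * (ν⁻¹)^2) := by
              rw [Finset.sum_const, Finset.card_univ, Fintype.card_prod, Fintype.card_fin,
                nsmul_eq_mul]
              push_cast
              ring

lemma ptwise_bound {N : ℕ} (hN : 1 ≤ N) {ν : ℝ} (hν : 0 < ν) (hν1 : ν ≤ 1)
    {a : Fin N → Fin N → ℝ} (hsym : ∀ i j, a i j = a j i)
    (hQ : ∀ ξ : Fin N → ℝ, ν * ∑ i, ξ i ^ 2 ≤ ∑ i, ∑ j, a i j * ξ i * ξ j ∧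
       ∑ i, ∑ j, a i j * ξ i * ξ j ≤ ν⁻¹ * ∑ i, ξ i ^ 2)
    (b : Fin N → Fin N → ℝ) (r : ℝ) :
    ((∑ i, ∑ j, a i j * b i j) - r) ^ 2
      ≤ 2 * (N:ℝ)^2 * (ν⁻¹)^2 * (r ^ 2 + ∑ i, ∑ j, b i j ^ 2) := by
  have hb := entry_bound hν hsym hQ
  have hquad := quad_sq_bound hν hb b
  have h1 : (1:ℝ) ≤ (N:ℝ) := by exact_mod_cast hN
  have h2 : (1:ℝ) ≤ ν⁻¹ := by nlinarith [mul_inv_cancel₀ hν.ne', inv_pos.2 hν]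
  have h3 : (1:ℝ) ≤ (N:ℝ) * ν⁻¹ := by nlinarith
  have hK1 : (1:ℝ) ≤ (N:ℝ)^2 * (ν⁻¹)^2 := by nlinarith
  have hS : 0 ≤ ∑ i, ∑ j, b i j ^ 2 :=
    Finset.sum_nonneg fun i _ => Finset.sum_nonneg fun j _ => sq_nonneg _
  nlinarith [hquad, hK1, hS, sq_nonneg ((∑ i, ∑ j, a i j * b i j) + r), sq_nonneg r,
    mul_nonneg (sub_nonneg.2 hK1) (sq_nonneg r)]



lemma stMeasureK_eq (N : ℕ) (T : ℝ) (K : Set (Fin N → ℝ)) :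
    stMeasureK N T K = (stMeasure N T).restrict (Set.univ ×ˢ K) := by
  rw [stMeasure, stMeasureK, ← Measure.prod_restrict, Measure.restrict_univ]

lemma memLp_cut {N : ℕ} {T : ℝ} {ζ : (Fin N → ℝ) → ℝ} (hζ : Continuous ζ)
    (hζc : HasCompactSupport ζ) {f : ℝ × (Fin N → ℝ) → ℝ}
    (hf : MemLp f 2 (stMeasureK N T (tsupport ζ))) :
    MemLp (fun p : ℝ × (Fin N → ℝ) => ζ p.2 * f p) 2 (stMeasure N T) ∧
    Integrable (fun p : ℝ × (Fin N → ℝ) => ζ p.2 * f p) (stMeasure N T) := by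
  obtain ⟨C, hC⟩ := hζc.exists_bound_of_continuous hζ
  set s : Set (ℝ × (Fin N → ℝ)) := Set.univ ×ˢ tsupport ζ with hs_def
  have hs : MeasurableSet s := MeasurableSet.univ.prod (isClosed_tsupport ζ).measurableSet
  have hKeq := stMeasureK_eq N T (tsupport ζ)
  have hmeas : AEStronglyMeasurable (fun p : ℝ × (Fin N → ℝ) => ζ p.2 * f p)
      (stMeasureK N T (tsupport ζ)) :=
    (hζ.comp continuous_snd).aestronglyMeasurable.mul hf.1
  have hbound : ∀ᵐ p ∂ (stMeasureK N T (tsupport ζ)),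
      ‖ζ p.2 * f p‖ ≤ C * ‖f p‖ := by
    filter_upwards with p
    rw [norm_mul]
    exact mul_le_mul_of_nonneg_right (hC p.2) (norm_nonneg _)
  have hrestrict : MemLp (fun p : ℝ × (Fin N → ℝ) => ζ p.2 * f p) 2
      ((stMeasure N T).restrict s) := by
    rw [← hKeq]
    exact hf.of_le_mul hmeas hbound
  have heq : (fun p : ℝ × (Fin N → ℝ) => ζ p.2 * f p)
      = s.indicator (fun p : ℝ × (Fin N → ℝ) => ζ p.2 * f p) := by
    funext p
    by_cases hp : p.2 ∈ tsupport ζ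
    · rw [Set.indicator_of_mem (show p ∈ s from ⟨Set.mem_univ _, hp⟩)]
    · rw [Set.indicator_of_notMem (fun hmem => hp hmem.2),
        image_eq_zero_of_notMem_tsupport hp, zero_mul]
  constructor
  · rw [heq]; exact (memLp_indicator_iff_restrict hs).2 hrestrict
  · haveI : IsFiniteMeasure ((stMeasure N T).restrict s) := by
      rw [← hKeq, stMeasureK]
      haveI h1 : IsFiniteMeasure (volume.restrict (tsupport ζ)) :=
        ⟨by rw [Measure.restrict_apply_univ]; exact hζc.measure_lt_top⟩
      haveI h2 : IsFiniteMeasure ((volume : Measure ℝ).restrict (Set.Ioo 0 T)) :=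
        ⟨by rw [Measure.restrict_apply_univ, Real.volume_Ioo]; exact ENNReal.ofReal_lt_top⟩
      infer_instance
    have hint : Integrable (fun p : ℝ × (Fin N → ℝ) => ζ p.2 * f p)
        ((stMeasure N T).restrict s) := hrestrict.integrable one_le_two
    rw [heq]
    exact (integrable_indicator_iff hs).2 hint
/-- the key `L²`-in-space, `1/2`-Hölder-in-time estimate.
If `u(t,·)` is smooth, `∂_x^β F` and `∂ᵢ∂ⱼ∂_x^β u ∈ L²_loc`, and `t ↦ ∂_x^β u(t,x)` is
absolutely continuous with derivative `Σ aᵢⱼ ∂ᵢ∂ⱼ∂_x^β u − ∂_x^β F` for a.e. `x`, then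
there is `c = c(N,ν)` with
`∫ ζ² (∂^β u(t₂) − ∂^β u(t₁))² ≤ c |t₂−t₁| (‖ζ ∂^β F‖² + Σᵢⱼ ‖ζ ∂ᵢ∂ⱼ∂^β u‖²)`. -/
theorem statement_12 (N : ℕ) (hN : 1 ≤ N) (ν : ℝ) (hν : 0 < ν) (hν1 : ν ≤ 1) :
    ∃ c : ℝ, 0 < c ∧
      ∀ (T : ℝ), 0 < T →
      ∀ a : ℝ → Fin N → Fin N → ℝ, IsElliptic N T ν a →
      ∀ (β : List (Fin N)) (u Fβ : ℝ × (Fin N → ℝ) → ℝ),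
        (∀ t : ℝ, ContDiff ℝ (⊤ : ℕ∞) (fun x => u (t, x))) →
        (∀ K : Set (Fin N → ℝ), IsCompact K → MemLp Fβ 2 (stMeasureK N T K)) →
        (∀ i j : Fin N, ∀ K : Set (Fin N → ℝ), IsCompact K →
          MemLp (fun p : ℝ × (Fin N → ℝ) => iterPD (i :: j :: β) (fun x => u (p.1, x)) p.2)
            2 (stMeasureK N T K)) →
        (∀ᵐ x ∂ (volume : Measure (Fin N → ℝ)),
          ∀ t₁ ∈ Set.Icc (0 : ℝ) T, ∀ t₂ ∈ Set.Icc (0 : ℝ) T,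
            iterPD β (fun y => u (t₂, y)) x - iterPD β (fun y => u (t₁, y)) x
              = ∫ s in t₁..t₂,
                  ((∑ i, ∑ j, a s i j * iterPD (i :: j :: β) (fun y => u (s, y)) x)
                    - Fβ (s, x))) →
        ∀ ζ : (Fin N → ℝ) → ℝ, ContDiff ℝ (⊤ : ℕ∞) ζ → HasCompactSupport ζ →
        ∀ t₁ t₂ : ℝ, 0 ≤ t₁ → t₁ < t₂ → t₂ ≤ T →
          ∫ x, ζ x ^ 2 *
              (iterPD β (fun y => u (t₂, y)) x - iterPD β (fun y => u (t₁, y)) x) ^ 2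
            ≤ c * (t₂ - t₁) *
              ((∫ p, (ζ p.2 * Fβ p) ^ 2 ∂(stMeasure N T))
                + ∑ i, ∑ j,
                    ∫ p, (ζ p.2 * iterPD (i :: j :: β) (fun y => u (p.1, y)) p.2) ^ 2
                      ∂(stMeasure N T)) := by
  classical
  have hNpos : (0:ℝ) < (N:ℝ) := by exact_mod_cast Nat.lt_of_lt_of_le Nat.zero_lt_one hN
  have hνinv : (0:ℝ) < ν⁻¹ := inv_pos.2 hν
  refine ⟨2 * (N:ℝ)^2 * (ν⁻¹)^2, by positivity, ?_⟩
  intro T hT a hell β u Fβ hu hFmem hCmem habs ζ hζ hζc t₁ t₂ ht₁0 ht₁₂ ht₂T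
  set c : ℝ := 2 * (N:ℝ)^2 * (ν⁻¹)^2 with hc_def
  have hcpos : 0 < c := by rw [hc_def]; positivity
  haveI inst1 : IsFiniteMeasure ((volume : Measure ℝ).restrict (Set.Ioo 0 T)) :=
    ⟨by rw [Measure.restrict_apply_univ, Real.volume_Ioo]; exact ENNReal.ofReal_lt_top⟩
  -- cutoff L² facts
  have hZF := memLp_cut hζ.continuous hζc (hFmem _ hζc)
  have hZC : ∀ i j : Fin N,
      MemLp (fun p : ℝ × (Fin N → ℝ) =>
        ζ p.2 * iterPD (i :: j :: β) (fun y => u (p.1, y)) p.2) 2 (stMeasure N T) ∧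
      Integrable (fun p : ℝ × (Fin N → ℝ) =>
        ζ p.2 * iterPD (i :: j :: β) (fun y => u (p.1, y)) p.2) (stMeasure N T) :=
    fun i j => memLp_cut hζ.continuous hζc (hCmem i j _ hζc)
  have iF : Integrable (fun p : ℝ × (Fin N → ℝ) => (ζ p.2 * Fβ p) ^ 2) (stMeasure N T) :=
    hZF.1.integrable_sq
  have iC : ∀ i j : Fin N, Integrable (fun p : ℝ × (Fin N → ℝ) =>
      (ζ p.2 * iterPD (i :: j :: β) (fun y => u (p.1, y)) p.2) ^ 2) (stMeasure N T) :=
    fun i j => (hZC i j).1.integrable_sq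
  set Q : ℝ × (Fin N → ℝ) → ℝ := fun p => c * ((ζ p.2 * Fβ p) ^ 2
    + ∑ i, ∑ j, (ζ p.2 * iterPD (i :: j :: β) (fun y => u (p.1, y)) p.2) ^ 2) with hQ_def
  have iS : Integrable (fun p : ℝ × (Fin N → ℝ) =>
      ∑ i, ∑ j, (ζ p.2 * iterPD (i :: j :: β) (fun y => u (p.1, y)) p.2) ^ 2)
      (stMeasure N T) :=
    integrable_finset_sum _ fun i _ => integrable_finset_sum _ fun j _ => iC i j
  have iQ : Integrable Q (stMeasure N T) := by
    rw [hQ_def]; exact (iF.add iS).const_mul c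
  have iQ' : Integrable Q ((volume.restrict (Set.Ioo 0 T)).prod
      (volume : Measure (Fin N → ℝ))) := iQ
  have hQ0 : ∀ p, 0 ≤ Q p := fun p => mul_nonneg hcpos.le (add_nonneg (sq_nonneg _)
    (Finset.sum_nonneg fun i _ => Finset.sum_nonneg fun j _ => sq_nonneg _))
  set B : (Fin N → ℝ) → ℝ := fun x => (t₂ - t₁) * ∫ s in Set.Ioo 0 T, Q (s, x) with hB_def
  have hB_int : Integrable B (volume : Measure (Fin N → ℝ)) := by
    rw [hB_def]; exact (iQ'.integral_prod_right).const_mul _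
  -- a.e. section facts
  have hsec_Q : ∀ᵐ x ∂(volume : Measure (Fin N → ℝ)),
      Integrable (fun s => Q (s, x)) (volume.restrict (Set.Ioo 0 T)) := iQ'.prod_left_ae
  have hsec_F : ∀ᵐ x ∂(volume : Measure (Fin N → ℝ)),
      Integrable (fun s => ζ x * Fβ (s, x)) (volume.restrict (Set.Ioo 0 T)) := hZF.2.prod_left_ae
  have hsec_C : ∀ᵐ x ∂(volume : Measure (Fin N → ℝ)), ∀ i j : Fin N,
      Integrable (fun s => ζ x * iterPD (i :: j :: β) (fun y => u (s, y)) x)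
        (volume.restrict (Set.Ioo 0 T)) := by
    rw [ae_all_iff]
    intro i
    rw [ae_all_iff]
    intro j
    exact (hZC i j).2.prod_left_ae
  -- pointwise (in x) estimate
  have hptwise : ∀ᵐ x ∂(volume : Measure (Fin N → ℝ)),
      ζ x ^ 2 * (iterPD β (fun y => u (t₂, y)) x - iterPD β (fun y => u (t₁, y)) x) ^ 2
        ≤ B x := by
    filter_upwards [habs, hsec_Q, hsec_F, hsec_C] with x h1 h2 h3 h4
    have ht₁m : t₁ ∈ Set.Icc (0:ℝ) T := ⟨ht₁0, ht₁₂.le.trans ht₂T⟩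
    have ht₂m : t₂ ∈ Set.Icc (0:ℝ) T := ⟨ht₁0.trans ht₁₂.le, ht₂T⟩
    set g : ℝ → ℝ := fun s =>
      (∑ i, ∑ j, a s i j * (ζ x * iterPD (i :: j :: β) (fun y => u (s, y)) x))
        - ζ x * Fβ (s, x) with hg_def
    have hnull : (volume : Measure ℝ) (Set.Ioc t₁ t₂ \ Set.Ioo 0 T) = 0 := by
      apply measure_mono_null (show Set.Ioc t₁ t₂ \ Set.Ioo 0 T ⊆ {T} from ?_)
      · exact Real.volume_singleton
      · intro s hs
        obtain ⟨⟨hs1, hs2⟩, hs3⟩ := hs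
        simp only [Set.mem_Ioo, not_and, not_lt] at hs3
        have h0s : (0:ℝ) < s := lt_of_le_of_lt ht₁0 hs1
        have hTs : T ≤ s := hs3 h0s
        have : s = T := le_antisymm (hs2.trans ht₂T) hTs
        simp [this]
    have hmle : (volume : Measure ℝ).restrict (Set.Ioc t₁ t₂)
        ≤ (volume : Measure ℝ).restrict (Set.Ioo 0 T) :=
      Measure.restrict_mono' (ae_le_set.2 hnull) le_rfl
    haveI inst2 : IsFiniteMeasure ((volume : Measure ℝ).restrict (Set.Ioc t₁ t₂)) :=
      ⟨by rw [Measure.restrict_apply_univ, Real.volume_Ioc]; exact ENNReal.ofReal_lt_top⟩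
    have hgmeas : AEStronglyMeasurable g ((volume : Measure ℝ).restrict (Set.Ioo 0 T)) := by
      rw [hg_def]
      apply AEStronglyMeasurable.sub
      · exact Finset.aestronglyMeasurable_fun_sum _ fun i _ =>
          Finset.aestronglyMeasurable_fun_sum _ fun j _ =>
            ((hell.1 i j).aestronglyMeasurable.mul (h4 i j).1)
      · exact h3.1
    have hgsq_le : ∀ᵐ s ∂ ((volume : Measure ℝ).restrict (Set.Ioo 0 T)),
        g s ^ 2 ≤ Q (s, x) := by
      filter_upwards [hell.2] with s hs
      obtain ⟨hsym, hQb⟩ := hs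
      have hpb := ptwise_bound hN hν hν1 hsym hQb
        (fun i j => ζ x * iterPD (i :: j :: β) (fun y => u (s, y)) x) (ζ x * Fβ (s, x))
      simpa [hg_def, hQ_def, hc_def] using hpb
    have hg2int : Integrable (fun s => g s ^ 2)
        ((volume : Measure ℝ).restrict (Set.Ioo 0 T)) := by
      apply Integrable.mono' h2
      · exact hgmeas.pow 2
      · filter_upwards [hgsq_le] with s hsb
        rw [Real.norm_eq_abs, abs_of_nonneg (sq_nonneg _)]
        exact hsb
    have e0 := h1 t₁ ht₁m t₂ ht₂m
    have hcongr : (∫ s in t₁..t₂,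
        ζ x * ((∑ i, ∑ j, a s i j * iterPD (i :: j :: β) (fun y => u (s, y)) x)
          - Fβ (s, x))) = ∫ s in t₁..t₂, g s := by
      apply intervalIntegral.integral_congr
      intro s _
      simp only [hg_def, mul_sub, Finset.mul_sum]
      congr 1
      exact Finset.sum_congr rfl fun i _ =>
        Finset.sum_congr rfl fun j _ => by ring
    calc ζ x ^ 2 * (iterPD β (fun y => u (t₂, y)) x - iterPD β (fun y => u (t₁, y)) x) ^ 2
        = (ζ x * (iterPD β (fun y => u (t₂, y)) x - iterPD β (fun y => u (t₁, y)) x)) ^ 2 := by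
          ring
      _ = (ζ x * ∫ s in t₁..t₂,
            ((∑ i, ∑ j, a s i j * iterPD (i :: j :: β) (fun y => u (s, y)) x)
              - Fβ (s, x))) ^ 2 := by rw [e0]
      _ = (∫ s in t₁..t₂,
            ζ x * ((∑ i, ∑ j, a s i j * iterPD (i :: j :: β) (fun y => u (s, y)) x)
              - Fβ (s, x))) ^ 2 := by rw [intervalIntegral.integral_const_mul]
      _ = (∫ s in t₁..t₂, g s) ^ 2 := by rw [hcongr]
      _ = (∫ s in Set.Ioc t₁ t₂, g s) ^ 2 := by rw [intervalIntegral.integral_of_le ht₁₂.le]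
      _ ≤ (((volume : Measure ℝ).restrict (Set.Ioc t₁ t₂)) Set.univ).toReal
            * ∫ s in Set.Ioc t₁ t₂, g s ^ 2 :=
          cs_integral (hgmeas.mono_measure hmle) (hg2int.mono_measure hmle)
      _ = (t₂ - t₁) * ∫ s in Set.Ioc t₁ t₂, g s ^ 2 := by
          rw [Measure.restrict_apply_univ, Real.volume_Ioc,
            ENNReal.toReal_ofReal (sub_nonneg.2 ht₁₂.le)]
      _ ≤ (t₂ - t₁) * ∫ s in Set.Ioc t₁ t₂, Q (s, x) := by
          apply mul_le_mul_of_nonneg_left _ (sub_nonneg.2 ht₁₂.le)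
          exact integral_mono_of_nonneg (Filter.Eventually.of_forall fun s => sq_nonneg _)
            (h2.mono_measure hmle) ((ae_mono hmle) hgsq_le)
      _ ≤ (t₂ - t₁) * ∫ s in Set.Ioo 0 T, Q (s, x) := by
          apply mul_le_mul_of_nonneg_left _ (sub_nonneg.2 ht₁₂.le)
          exact setIntegral_mono_set h2 (Filter.Eventually.of_forall fun s => hQ0 _)
            (ae_le_set.2 hnull)
      _ = B x := by rw [hB_def]
  -- assemble
  have hmain : ∫ x, ζ x ^ 2 *
      (iterPD β (fun y => u (t₂, y)) x - iterPD β (fun y => u (t₁, y)) x) ^ 2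
      ≤ ∫ x, B x :=
    integral_mono_of_nonneg
      (Filter.Eventually.of_forall fun x => mul_nonneg (sq_nonneg _) (sq_nonneg _))
      hB_int hptwise
  have e1 : ∫ x, B x = (t₂ - t₁) * ∫ p, Q p ∂(stMeasure N T) := by
    rw [hB_def]
    rw [MeasureTheory.integral_const_mul]
    congr 1
    exact (integral_prod_symm Q iQ').symm
  have e2 : ∫ p, Q p ∂(stMeasure N T)
      = c * ((∫ p, (ζ p.2 * Fβ p) ^ 2 ∂(stMeasure N T))
        + ∑ i, ∑ j, ∫ p, (ζ p.2 * iterPD (i :: j :: β) (fun y => u (p.1, y)) p.2) ^ 2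
            ∂(stMeasure N T)) := by
    rw [hQ_def]
    rw [MeasureTheory.integral_const_mul]
    congr 1
    rw [integral_add iF iS]
    congr 1
    rw [integral_finset_sum _ (fun i _ => integrable_finset_sum _ fun j _ => iC i j)]
    exact Finset.sum_congr rfl fun i _ => integral_finset_sum _ fun j _ => iC i j
  rw [e1, e2] at hmain
  calc ∫ x, ζ x ^ 2 *
      (iterPD β (fun y => u (t₂, y)) x - iterPD β (fun y => u (t₁, y)) x) ^ 2
      ≤ (t₂ - t₁) * (c * ((∫ p, (ζ p.2 * Fβ p) ^ 2 ∂(stMeasure N T))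
        + ∑ i, ∑ j, ∫ p, (ζ p.2 * iterPD (i :: j :: β) (fun y => u (p.1, y)) p.2) ^ 2
            ∂(stMeasure N T))) := hmain
    _ = c * (t₂ - t₁) * ((∫ p, (ζ p.2 * Fβ p) ^ 2 ∂(stMeasure N T))
        + ∑ i, ∑ j, ∫ p, (ζ p.2 * iterPD (i :: j :: β) (fun y => u (p.1, y)) p.2) ^ 2
            ∂(stMeasure N T)) := by ring

end
end

section
/- Let α ∈ (1/2, 1) and U(t,x) = t^α u(t,x). Then: (a) U(0,x) = 0 for every x ∈ ℝ; (b) for a.e. t ∈ (0,1) and every x ∈ ℝ, −∂_t U(t,x) + a(t)∂²_{xx}U(t,x) = F(t,x), where F(t,x) = −α t^{α−1} u(t,x); (c) for every R > 0, ∫₀^1 ∫_{−R}^{R} F(t,x)² dx dt < ∞, i.e. F ∈ L²((0,1), L²_loc(ℝ)). -/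
open MeasureTheory Set
open scoped ENNReal

noncomputable section

/-- `A(t) = ∫₀^t a(τ) dτ`. -/
def exA (a : ℝ → ℝ) (t : ℝ) : ℝ := ∫ τ in (0:ℝ)..t, a τ

/-- The example solution `u(t,x) = exp(−A(t)) · sin x`. -/
def exU (a : ℝ → ℝ) (t x : ℝ) : ℝ := Real.exp (-exA a t) * Real.sin x

/-!
By Lebesgue's differentiation theorem `A' = a` almost everywhere, and at every such `t > 0`
the product rule gives `∂_t U = α t^(α-1) u - a(t) U`, while `∂²_{xx} U = -U`; hence `ℒU = F`.
The source `F(t,x) = -α t^(α-1) e^(-A(t)) sin x` is the product of `t^(α-1)`, square integrable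
on `(0,1)` because `α > 1/2`, and of a factor that is bounded since `A` is continuous on `[0,1]`.
-/

lemma integrableOn_of_ae_mem_Icc {X : Type*} [MeasurableSpace X] {μ : Measure X}
    {s : Set X} {f : X → ℝ} {m M : ℝ} (hf : AEStronglyMeasurable f μ) (hs : μ s ≠ ∞)
    (hbd : ∀ᵐ x ∂μ.restrict s, m ≤ f x ∧ f x ≤ M) : IntegrableOn f s μ := by
  refine Measure.integrableOn_of_bounded hs hf (M := max |m| |M|) ?_
  filter_upwards [hbd] with x ⟨hm, hM⟩
  rw [Real.norm_eq_abs, abs_le]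
  constructor <;> cases abs_cases m <;> cases abs_cases M <;>
    linarith [le_max_left |m| |M|, le_max_right |m| |M|]

lemma memLp_two_rpow_Ioo {β c : ℝ} (hβ : -1 < 2 * β) :
    MemLp (fun t : ℝ => t ^ β) 2 (volume.restrict (Ioo 0 c)) := by
  refine (memLp_two_iff_integrable_sq (measurable_id.pow_const β).aestronglyMeasurable).2 ?_
  refine IntegrableOn.congr_fun (f := fun t : ℝ => t ^ (2 * β)) ?_ (fun t ht => ?_)
    measurableSet_Ioo
  · exact (intervalIntegral.intervalIntegrable_rpow' hβ).1.mono_set Ioo_subset_Ioc_self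
  · change t ^ (2 * β) = (t ^ β) ^ (2 : ℕ)
    rw [mul_comm, Real.rpow_mul ht.1.le, Real.rpow_two]

section Primitive

variable {a : ℝ → ℝ} {T : ℝ}

lemma ae_hasDerivAt_exA (ha : IntervalIntegrable a volume 0 T) :
    ∀ᵐ t ∂volume.restrict (uIcc 0 T), HasDerivAt (exA a) (a t) t := by
  rw [ae_restrict_iff' measurableSet_uIcc]
  filter_upwards [ha.ae_hasDerivAt_integral] with t ht htT
  exact ht htT 0 left_mem_uIcc

lemma memLp_top_exp_neg_exA (ha : IntervalIntegrable a volume 0 T) :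
    MemLp (fun t => Real.exp (-exA a t)) ∞ (volume.restrict (uIcc 0 T)) := by
  have hcont : ContinuousOn (fun t => Real.exp (-exA a t)) (uIcc 0 T) :=
    (intervalIntegral.continuousOn_primitive_interval' ha left_mem_uIcc).neg.rexp
  obtain ⟨C, hC⟩ := isCompact_uIcc.exists_bound_of_continuousOn hcont
  refine memLp_top_of_bound (hcont.aestronglyMeasurable measurableSet_uIcc) C ?_
  filter_upwards [ae_restrict_mem measurableSet_uIcc] with t ht using hC t ht

end Primitive

lemma hasDerivAt_rpow_mul_exU {a : ℝ → ℝ} {α t : ℝ} (x : ℝ) (ht : t ≠ 0)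
    (hA : HasDerivAt (exA a) (a t) t) :
    HasDerivAt (fun s => s ^ α * exU a s x)
      (α * t ^ (α - 1) * exU a t x - a t * (t ^ α * exU a t x)) t := by
  have hu : HasDerivAt (fun s => exU a s x) (Real.exp (-exA a t) * -a t * Real.sin x) t :=
    (hA.neg.exp).mul_const _
  refine ((Real.hasDerivAt_rpow_const (p := α) (Or.inl ht)).mul hu).congr_deriv ?_
  simp only [exU]
  ring

lemma deriv_deriv_const_mul_exU (a : ℝ → ℝ) (c t x : ℝ) :
    deriv (deriv fun y => c * exU a t y) x = -(c * exU a t x) := by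
  have h1 : deriv (fun y => c * exU a t y) = fun y => c * Real.exp (-exA a t) * Real.cos y := by
    funext y
    simp only [exU, ← mul_assoc]
    exact ((Real.hasDerivAt_sin y).const_mul _).deriv
  rw [h1, ((Real.hasDerivAt_cos x).const_mul _).deriv, exU]
  ring

lemma memLp_two_rpow_mul_exU {a : ℝ → ℝ} (ha : IntervalIntegrable a volume 0 1) {β : ℝ}
    (hβ : -1 < 2 * β) (c : ℝ) (ν : Measure ℝ) [IsFiniteMeasure ν] :
    MemLp (fun p : ℝ × ℝ => c * p.1 ^ β * exU a p.1 p.2) 2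
      ((volume.restrict (Ioo 0 1)).prod ν) := by
  have hpow : MemLp (fun t : ℝ => c * t ^ β) 2 (volume.restrict (Ioo 0 1)) :=
    (memLp_two_rpow_Ioo hβ).const_mul c
  have hexp : MemLp (fun t => Real.exp (-exA a t)) ∞ (volume.restrict (Ioo 0 1)) :=
    (memLp_top_exp_neg_exA ha).mono_measure
      (Measure.restrict_mono (Ioo_subset_Icc_self.trans_eq (uIcc_of_le zero_le_one).symm) le_rfl)
  have hsin : MemLp Real.sin ∞ ν :=
    memLp_top_of_bound Real.continuous_sin.aestronglyMeasurable 1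
      (.of_forall fun x => (Real.norm_eq_abs _).trans_le (Real.abs_sin_le_one x))
  exact ((hsin.comp_snd _).mul' (r := ∞) (hexp.comp_fst ν)).mul' (hpow.comp_fst ν)

theorem statement_16_general (ν M : ℝ) (a : ℝ → ℝ) (ha : Measurable a)
    (hbd : ∀ᵐ t ∂ volume.restrict (Set.Ici 0), ν ≤ a t ∧ a t ≤ M)
    (α : ℝ) (hα : α ∈ Set.Ioo (1/2 : ℝ) 1) :
    (∀ x : ℝ, (0 : ℝ) ^ α * exU a 0 x = 0) ∧
    (∀ᵐ t ∂ volume.restrict (Set.Ioo (0:ℝ) 1), ∀ x : ℝ,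
      ∃ d : ℝ, HasDerivAt (fun s : ℝ => s ^ α * exU a s x) d t ∧
        -d + a t * deriv (deriv (fun y => t ^ α * exU a t y)) x
          = -α * t ^ (α - 1) * exU a t x) ∧
    (∀ R : ℝ, 0 < R →
      MemLp (fun p : ℝ × ℝ => -α * p.1 ^ (α - 1) * exU a p.1 p.2) 2
        ((volume.restrict (Set.Ioo (0:ℝ) 1)).prod (volume.restrict (Set.Icc (-R) R)))) := by
  have hint : IntervalIntegrable a volume 0 1 := by
    rw [intervalIntegrable_iff_integrableOn_Ioc_of_le zero_le_one]
    exact integrableOn_of_ae_mem_Icc ha.aestronglyMeasurable measure_Ioc_lt_top.ne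
      (ae_restrict_of_ae_restrict_of_subset (Ioc_subset_Ioi_self.trans Ioi_subset_Ici_self) hbd)
  refine ⟨fun x => by rw [Real.zero_rpow (by linarith [hα.1]), zero_mul], ?_,
    fun R _ => memLp_two_rpow_mul_exU hint (by linarith [hα.1]) _ _⟩
  have hA : ∀ᵐ t ∂volume.restrict (Ioo 0 1), HasDerivAt (exA a) (a t) t :=
    ae_restrict_of_ae_restrict_of_subset
      (Ioo_subset_Icc_self.trans_eq (uIcc_of_le zero_le_one).symm) (ae_hasDerivAt_exA hint)
  filter_upwards [hA, ae_restrict_mem measurableSet_Ioo] with t hAt ht x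
  refine ⟨_, hasDerivAt_rpow_mul_exU x ht.1.ne' hAt, ?_⟩
  rw [deriv_deriv_const_mul_exU]
  ring

/-- `U = t^α u` solves `ℒU = F` with `F ∈ L²((0,1),L²_loc)`.
For `α ∈ (1/2,1)` and `U(t,x) = t^α u(t,x)`: (a) `U(0,·) = 0`; (b) for a.e. `t ∈ (0,1)`
and all `x`, `−∂_t U + a(t) ∂²_{xx} U = F(t,x)` with `F(t,x) = −α t^{α−1} u(t,x)`;
(c) `F ∈ L²((0,1),L²_loc(ℝ))`. -/
theorem statement_16 (ν M : ℝ) (hν : 0 < ν) (hM : 0 < M) (a : ℝ → ℝ) (ha : Measurable a)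
    (hbd : ∀ᵐ t ∂ volume.restrict (Set.Ici 0), ν ≤ a t ∧ a t ≤ M)
    (α : ℝ) (hα : α ∈ Set.Ioo (1/2 : ℝ) 1) :
    (∀ x : ℝ, (0 : ℝ) ^ α * exU a 0 x = 0) ∧
    (∀ᵐ t ∂ volume.restrict (Set.Ioo (0:ℝ) 1), ∀ x : ℝ,
      ∃ d : ℝ, HasDerivAt (fun s : ℝ => s ^ α * exU a s x) d t ∧
        -d + a t * deriv (deriv (fun y => t ^ α * exU a t y)) x
          = -α * t ^ (α - 1) * exU a t x) ∧
    (∀ R : ℝ, 0 < R →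
      MemLp (fun p : ℝ × ℝ => -α * p.1 ^ (α - 1) * exU a p.1 p.2) 2
        ((volume.restrict (Set.Ioo (0:ℝ) 1)).prod (volume.restrict (Set.Icc (-R) R)))) :=
  statement_16_general ν M a ha hbd α hα
end
end

section
/- Let α ∈ (1/2, 1) and U(t,x) = t^α u(t,x). Then: (a) there exists a constant C = C(α, M) such that for every integer j ≥ 0, all t₁, t₂ ∈ [0,1] and all x ∈ ℝ: |∂_x^j U(t₂,x) − ∂_x^j U(t₁,x)| ≤ C|t₂ − t₁|^α (so U and all its space derivatives are α-Hölder continuous in time, uniformly in x); and (b) for a.e. t ∈ (0,1), ∂_t U(t,·) exists, is C^∞ in x, and for every integer j ≥ 0: ∫₀^1 ( sup_{x∈ℝ} |∂_x^j ∂_t U(t,x)| )² dt < ∞, i.e. U ∈ W^{1,2}((0,1), C^∞(ℝ)). -/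
open MeasureTheory Set
open scoped ENNReal

noncomputable section

open Filter Topology

lemma sin_iter (j : ℕ) : deriv^[j] Real.sin = Real.sin ∨ deriv^[j] Real.sin = Real.cos ∨
    deriv^[j] Real.sin = (fun x => -Real.sin x) ∨ deriv^[j] Real.sin = (fun x => -Real.cos x) := by
  induction j with
  | zero => left; rfl
  | succ n ih =>
    rw [Function.iterate_succ_apply']
    rcases ih with h | h | h | h <;> rw [h]
    · right; left; exact Real.deriv_sin
    · right; right; left; exact Real.deriv_cos'
    · right; right; right
      funext x; rw [deriv.fun_neg, Real.deriv_sin]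
    · left
      funext x; rw [deriv.fun_neg, Real.deriv_cos, neg_neg]

lemma sin_iter_bound (j : ℕ) (x : ℝ) : |deriv^[j] Real.sin x| ≤ 1 := by
  rcases sin_iter j with h | h | h | h <;> rw [h] <;>
    simp [abs_neg, Real.abs_sin_le_one, Real.abs_cos_le_one]

lemma iter_deriv_const_mul_sin (c : ℝ) (j : ℕ) :
    deriv^[j] (fun y => c * Real.sin y) = fun y => c * deriv^[j] Real.sin y := by
  induction j with
  | zero => rfl
  | succ n ih =>
    rw [Function.iterate_succ_apply', Function.iterate_succ_apply', ih,
      deriv_const_mul_field']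

lemma exp_neg_lip {u v : ℝ} (hu : 0 ≤ u) (hv : 0 ≤ v) :
    |Real.exp (-u) - Real.exp (-v)| ≤ |u - v| := by
  have key : ∀ s t : ℝ, 0 ≤ s → s ≤ t → Real.exp (-s) - Real.exp (-t) ≤ t - s ∧
      0 ≤ Real.exp (-s) - Real.exp (-t) := by
    intro s t hs hst
    have hprod : Real.exp (-t) = Real.exp (-s) * Real.exp (-(t - s)) := by
      rw [← Real.exp_add]; ring_nf
    constructor
    · nlinarith [Real.add_one_le_exp (-(t - s)),
        Real.exp_le_one_iff.2 (by linarith : -s ≤ (0:ℝ)),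
        Real.exp_le_one_iff.2 (by linarith : -(t - s) ≤ (0:ℝ)),
        Real.exp_pos (-s), Real.exp_pos (-(t - s))]
    · have := Real.exp_le_exp.2 (by linarith : -t ≤ -s); linarith
  rcases le_total u v with h | h
  · obtain ⟨h1, h2⟩ := key u v hu h
    rw [abs_of_nonneg h2, abs_of_nonpos (by linarith)]
    linarith
  · obtain ⟨h1, h2⟩ := key v u hv h
    rw [abs_sub_comm, abs_of_nonneg h2, abs_of_nonneg (by linarith)]
    linarith

lemma rpow_sub_le {s t α : ℝ} (hs : 0 ≤ s) (hst : s ≤ t) (h0 : 0 ≤ α) (h1 : α ≤ 1) :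
    t ^ α - s ^ α ≤ (t - s) ^ α := by
  have h := NNReal.rpow_add_le_add_rpow (t - s).toNNReal s.toNNReal h0 h1
  rw [← NNReal.coe_le_coe] at h
  rw [NNReal.coe_add, NNReal.coe_rpow, NNReal.coe_rpow, NNReal.coe_rpow, NNReal.coe_add,
    Real.coe_toNNReal _ (by linarith : (0:ℝ) ≤ t - s), Real.coe_toNNReal _ hs,
    show t - s + s = t by ring] at h
  linarith

lemma ftc_ae {b : ℝ → ℝ} (hb : Measurable b) {K : ℝ} (hK : ∀ t, |b t| ≤ K) :
    ∀ᵐ x : ℝ, HasDerivAt (fun s => ∫ τ in (0:ℝ)..s, b τ) (b x) x := by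
  have hloc : LocallyIntegrable b volume := by
    intro x
    refine ⟨Metric.closedBall x 1, Metric.closedBall_mem_nhds x one_pos, ?_⟩
    refine Integrable.mono' (g := fun _ => K) ?_ hb.aestronglyMeasurable.restrict ?_
    · exact integrableOn_const measure_closedBall_lt_top.ne
    · exact Eventually.of_forall fun y => by simpa [Real.norm_eq_abs] using hK y
  have hint : ∀ u v : ℝ, IntervalIntegrable b volume u v := fun u v =>
    (hloc.integrableOn_isCompact isCompact_uIcc).intervalIntegrable
  filter_upwards [IsUnifLocDoublingMeasure.ae_tendsto_average_norm_sub (volume : Measure ℝ) hloc 1]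
    with x hx
  rw [hasDerivAt_iff_tendsto_slope]
  set F : ℝ → ℝ := fun s => ∫ τ in (0:ℝ)..s, b τ with hF
  have hδ : Tendsto (fun y : ℝ => |y - x| / 2) (𝓝[≠] x) (𝓝[>] (0:ℝ)) := by
    apply tendsto_nhdsWithin_of_tendsto_nhds_of_eventually_within
    · have h0 : Tendsto (fun y : ℝ => |y - x| / 2) (𝓝 x) (𝓝 (|x - x| / 2)) :=
        (((continuous_id.sub continuous_const).abs).div_const 2).continuousAt
      simpa using h0.mono_left nhdsWithin_le_nhds
    · filter_upwards [self_mem_nhdsWithin] with y hy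
      have : y - x ≠ 0 := sub_ne_zero.2 hy
      exact div_pos (abs_pos.2 this) two_pos
  have hmem : ∀ᶠ y in 𝓝[≠] x, x ∈ Metric.closedBall ((x + y) / 2) (1 * (|y - x| / 2)) := by
    apply Eventually.of_forall; intro y
    rw [Metric.mem_closedBall, Real.dist_eq, one_mul,
      show x - (x + y) / 2 = (x - y) / 2 by ring, abs_div, abs_sub_comm]
    simp [abs_of_nonneg]
  have key := hx (fun y => (x + y) / 2) (fun y => |y - x| / 2) hδ hmem
  have hsq : Tendsto (fun y => slope F x y - b x) (𝓝[≠] x) (𝓝 0) := by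
    apply squeeze_zero_norm' ?_ key
    filter_upwards [self_mem_nhdsWithin] with y hy
    have hyx : y - x ≠ 0 := sub_ne_zero.2 hy
    have habs : (0:ℝ) < |y - x| := abs_pos.2 hyx
    set m := (x + y) / 2 with hm
    set r := |y - x| / 2 with hr
    have hrpos : 0 < r := by positivity
    have hFsub : F y - F x = ∫ τ in x..y, b τ :=
      intervalIntegral.integral_interval_sub_left (hint 0 y) (hint 0 x)
    have hslope : slope F x y - b x = (∫ τ in x..y, (b τ - b x)) / (y - x) := by
      rw [slope_def_field, hFsub,
        intervalIntegral.integral_sub (hint x y) intervalIntegrable_const,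
        intervalIntegral.integral_const, smul_eq_mul]
      field_simp
    have hsub : Set.uIoc x y ⊆ Metric.closedBall m r := by
      intro τ hτ
      rw [Set.mem_uIoc] at hτ
      rw [Metric.mem_closedBall, Real.dist_eq, hm, hr, abs_le]
      rcases hτ with ⟨h1, h2⟩ | ⟨h1, h2⟩
      · rw [abs_of_nonneg (by linarith : (0:ℝ) ≤ y - x)]
        constructor <;> linarith
      · rw [abs_of_nonpos (by linarith : y - x ≤ (0:ℝ))]
        constructor <;> linarith
    have hball_int : IntegrableOn (fun τ => ‖b τ - b x‖) (Metric.closedBall m r) volume :=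
      ((hloc.integrableOn_isCompact (isCompact_closedBall m r)).sub
        (integrableOn_const measure_closedBall_lt_top.ne)).norm
    have hvol : (volume (Metric.closedBall m r)).toReal = 2 * r := by
      rw [Real.volume_closedBall, ENNReal.toReal_ofReal (by positivity)]
    calc ‖slope F x y - b x‖
        = |∫ τ in x..y, (b τ - b x)| / |y - x| := by
          rw [hslope, Real.norm_eq_abs, abs_div]
      _ ≤ (∫ τ in Set.uIoc x y, ‖b τ - b x‖) / |y - x| := by
          gcongr
          rw [← Real.norm_eq_abs]
          exact intervalIntegral.norm_integral_le_integral_norm_uIoc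
      _ ≤ (∫ τ in Metric.closedBall m r, ‖b τ - b x‖) / |y - x| := by
          gcongr
          exact Eventually.of_forall fun τ => norm_nonneg _
      _ = ⨍ τ in Metric.closedBall m r, ‖b τ - b x‖ := by
          rw [setAverage_eq, smul_eq_mul, measureReal_def, hvol, show |y - x| = 2 * r by rw [hr]; ring]
          ring
  have := hsq.add_const (b x)
  simpa using this

/-- `U = t^α u` is `α`-Hölder in time with all space derivatives, and
`U ∈ W^{1,2}((0,1),C^∞(ℝ))`.
There is `C = C(α,M)` with `|∂_x^j U(t₂,x) − ∂_x^j U(t₁,x)| ≤ C|t₂−t₁|^α` on `[0,1]`;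
moreover for a.e. `t`, `∂_t U(t,x) = (α t^{α−1} − t^α a(t)) u(t,x)` exists, is `C^∞` in
`x`, and `∫₀^1 (sup_x |∂_x^j ∂_t U|)² dt < ∞` for every `j`. -/
theorem statement_17 (ν M : ℝ) (hν : 0 < ν) (hM : 0 < M)
    (α : ℝ) (hα : α ∈ Set.Ioo (1/2 : ℝ) 1) :
    ∃ C : ℝ, 0 < C ∧
      ∀ a : ℝ → ℝ, Measurable a →
        (∀ᵐ t ∂ volume.restrict (Set.Ici 0), ν ≤ a t ∧ a t ≤ M) →
        (∀ j : ℕ, ∀ t₁ ∈ Set.Icc (0:ℝ) 1, ∀ t₂ ∈ Set.Icc (0:ℝ) 1, ∀ x : ℝ,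
          |deriv^[j] (fun y => t₂ ^ α * exU a t₂ y) x
              - deriv^[j] (fun y => t₁ ^ α * exU a t₁ y) x|
            ≤ C * |t₂ - t₁| ^ α) ∧
        (∀ᵐ t ∂ volume.restrict (Set.Ioo (0:ℝ) 1), ∀ x : ℝ,
          HasDerivAt (fun s : ℝ => s ^ α * exU a s x)
            ((α * t ^ (α - 1) - t ^ α * a t) * exU a t x) t) ∧
        (∀ᵐ t ∂ volume.restrict (Set.Ioo (0:ℝ) 1),
          ContDiff ℝ (⊤ : ℕ∞) (fun x => (α * t ^ (α - 1) - t ^ α * a t) * exU a t x)) ∧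
        (∀ j : ℕ, ∫⁻ t in Set.Ioo (0:ℝ) 1,
          (⨆ x : ℝ, ENNReal.ofReal
            |deriv^[j] (fun y => (α * t ^ (α - 1) - t ^ α * a t) * exU a t y) x|) ^ 2 < ⊤) := by
  obtain ⟨hα1, hα2⟩ := hα
  have hα0 : (0:ℝ) < α := by linarith
  refine ⟨1 + M, by linarith, ?_⟩
  intro a hmeas hae
  have hνM : ν ≤ M := by
    have hne : NeBot (ae (volume.restrict (Ici (0:ℝ)))) := by
      rw [ae_neBot]
      intro h
      have h2 := congrArg (fun μ : Measure ℝ => μ (Ici 0)) h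
      simp [Measure.restrict_apply_self, Real.volume_Ici] at h2
    obtain ⟨t, ht1, ht2⟩ := hae.exists
    linarith
  set b : ℝ → ℝ := fun t => if ν ≤ a t ∧ a t ≤ M then a t else ν with hbdef
  have hbmeas : Measurable b :=
    Measurable.ite ((measurableSet_le measurable_const hmeas).inter
      (measurableSet_le hmeas measurable_const)) hmeas measurable_const
  have hbbd : ∀ t, ν ≤ b t ∧ b t ≤ M := by
    intro t
    simp only [hbdef]
    by_cases h : ν ≤ a t ∧ a t ≤ M
    · rw [if_pos h]; exact h
    · rw [if_neg h]; exact ⟨le_rfl, hνM⟩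
  have hbabs : ∀ t, |b t| ≤ M := fun t =>
    abs_le.2 ⟨by linarith [(hbbd t).1], (hbbd t).2⟩
  have hba : ∀ᵐ t ∂ volume.restrict (Ici (0:ℝ)), b t = a t := by
    filter_upwards [hae] with t ht
    simp only [hbdef]
    rw [if_pos ht]
  set B : ℝ → ℝ := fun s => ∫ τ in (0:ℝ)..s, b τ with hBdef
  have hint : ∀ u v : ℝ, IntervalIntegrable b volume u v := by
    intro u v
    refine IntegrableOn.intervalIntegrable ?_
    refine Integrable.mono' (g := fun _ => M)
      (integrableOn_const isCompact_uIcc.measure_lt_top.ne)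
      hbmeas.aestronglyMeasurable.restrict ?_
    exact Eventually.of_forall fun y => by simpa [Real.norm_eq_abs] using hbabs y
  have hAB : ∀ s ∈ Icc (0:ℝ) 1, exA a s = B s := by
    intro s hs
    show (∫ τ in (0:ℝ)..s, a τ) = ∫ τ in (0:ℝ)..s, b τ
    refine intervalIntegral.integral_congr_ae ?_
    have h1 : ∀ᵐ t ∂ volume.restrict (Ici (0:ℝ)), a t = b t := hba.mono fun t ht => ht.symm
    rw [ae_restrict_iff' measurableSet_Ici] at h1
    filter_upwards [h1] with t ht hmem
    rw [Set.uIoc_of_le hs.1] at hmem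
    exact ht (le_of_lt hmem.1)
  have hBinc : ∀ s t : ℝ, 0 ≤ s → s ≤ t → 0 ≤ B t - B s ∧ B t - B s ≤ M * (t - s) := by
    intro s t hs hst
    have hsub : B t - B s = ∫ τ in s..t, b τ :=
      intervalIntegral.integral_interval_sub_left (hint 0 t) (hint 0 s)
    constructor
    · rw [hsub]
      exact intervalIntegral.integral_nonneg hst fun u _ => by linarith [(hbbd u).1]
    · rw [hsub]
      calc ∫ τ in s..t, b τ ≤ ∫ τ in s..t, M :=
            intervalIntegral.integral_mono_on hst (hint s t) intervalIntegrable_const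
              fun u _ => (hbbd u).2
        _ = M * (t - s) := by rw [intervalIntegral.integral_const, smul_eq_mul]; ring
  have hB0 : B 0 = 0 := intervalIntegral.integral_same
  have hBnonneg : ∀ s, 0 ≤ s → 0 ≤ B s := by
    intro s hs
    have := (hBinc 0 s le_rfl hs).1
    rw [hB0] at this; linarith
  have hc : ∀ s t : ℝ, s ∈ Icc (0:ℝ) 1 → t ∈ Icc (0:ℝ) 1 → s ≤ t →
      |t ^ α * Real.exp (-B t) - s ^ α * Real.exp (-B s)| ≤ (1 + M) * (t - s) ^ α := by
    intro s t hs ht hst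
    have he2pos : (0:ℝ) < Real.exp (-B t) := Real.exp_pos _
    have he2le : Real.exp (-B t) ≤ 1 := Real.exp_le_one_iff.2 (by linarith [hBnonneg t ht.1])
    have hee : |Real.exp (-B t) - Real.exp (-B s)| ≤ M * (t - s) := by
      calc |Real.exp (-B t) - Real.exp (-B s)| ≤ |B t - B s| :=
            exp_neg_lip (hBnonneg t ht.1) (hBnonneg s hs.1)
        _ = B t - B s := abs_of_nonneg (hBinc s t hs.1 hst).1
        _ ≤ M * (t - s) := (hBinc s t hs.1 hst).2
    have hts1 : t - s ≤ 1 := by linarith [ht.2, hs.1]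
    have hts0 : (0:ℝ) ≤ t - s := by linarith
    have hpow : t ^ α - s ^ α ≤ (t - s) ^ α := rpow_sub_le hs.1 hst hα0.le hα2.le
    have hpow0 : (0:ℝ) ≤ t ^ α - s ^ α := sub_nonneg.2 (Real.rpow_le_rpow hs.1 hst hα0.le)
    have hsα1 : s ^ α ≤ 1 := Real.rpow_le_one hs.1 hs.2 hα0.le
    have hts' : t - s ≤ (t - s) ^ α := by
      rcases eq_or_lt_of_le hts0 with h | h
      · rw [← h]; simp [Real.zero_rpow (ne_of_gt hα0)]
      · calc t - s = (t - s) ^ (1:ℝ) := (Real.rpow_one _).symm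
          _ ≤ (t - s) ^ α := Real.rpow_le_rpow_of_exponent_ge h hts1 hα2.le
    have hid : t ^ α * Real.exp (-B t) - s ^ α * Real.exp (-B s) =
        (t ^ α - s ^ α) * Real.exp (-B t) + s ^ α * (Real.exp (-B t) - Real.exp (-B s)) := by
      ring
    calc |t ^ α * Real.exp (-B t) - s ^ α * Real.exp (-B s)|
        ≤ |(t ^ α - s ^ α) * Real.exp (-B t)| + |s ^ α * (Real.exp (-B t) - Real.exp (-B s))| := by
          rw [hid]; exact abs_add_le _ _
      _ = (t ^ α - s ^ α) * Real.exp (-B t) + s ^ α * |Real.exp (-B t) - Real.exp (-B s)| := by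
          rw [abs_mul, abs_mul, abs_of_nonneg hpow0, abs_of_nonneg he2pos.le,
            abs_of_nonneg (Real.rpow_nonneg hs.1 α)]
      _ ≤ (t - s) ^ α * 1 + 1 * (M * (t - s)) :=
          add_le_add (mul_le_mul hpow he2le he2pos.le (Real.rpow_nonneg hts0 α))
            (mul_le_mul hsα1 hee (abs_nonneg _) zero_le_one)
      _ ≤ (t - s) ^ α + M * (t - s) ^ α := by
          rw [mul_one, one_mul]
          have : M * (t - s) ≤ M * (t - s) ^ α := mul_le_mul_of_nonneg_left hts' hM.le
          linarith
      _ = (1 + M) * (t - s) ^ α := by ring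
  have hred : ∀ (c : ℝ) (t : ℝ) (j : ℕ) (x : ℝ),
      deriv^[j] (fun y => c * exU a t y) x
        = (c * Real.exp (-exA a t)) * deriv^[j] Real.sin x := by
    intro c t j x
    have h1 : (fun y => c * exU a t y) = fun y => (c * Real.exp (-exA a t)) * Real.sin y := by
      funext y; simp only [exU]; ring
    rw [h1, iter_deriv_const_mul_sin]
  refine ⟨?_, ?_, ?_, ?_⟩
  · -- (a) Hölder estimate
    intro j t₁ ht₁ t₂ ht₂ x
    rw [hred, hred]
    have key : ∀ s t : ℝ, s ∈ Icc (0:ℝ) 1 → t ∈ Icc (0:ℝ) 1 → s ≤ t →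
        |t ^ α * Real.exp (-exA a t) * deriv^[j] Real.sin x
            - s ^ α * Real.exp (-exA a s) * deriv^[j] Real.sin x|
          ≤ (1 + M) * |t - s| ^ α := by
      intro s t hs ht hst
      rw [abs_of_nonneg (sub_nonneg.2 hst), hAB s hs, hAB t ht]
      calc |t ^ α * Real.exp (-B t) * deriv^[j] Real.sin x
            - s ^ α * Real.exp (-B s) * deriv^[j] Real.sin x|
          = |t ^ α * Real.exp (-B t) - s ^ α * Real.exp (-B s)| * |deriv^[j] Real.sin x| := by
            rw [← sub_mul, abs_mul]
        _ ≤ ((1 + M) * (t - s) ^ α) * 1 :=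
            mul_le_mul (hc s t hs ht hst) (sin_iter_bound j x) (abs_nonneg _)
              (mul_nonneg (by linarith) (Real.rpow_nonneg (by linarith) _))
        _ = (1 + M) * (t - s) ^ α := mul_one _
    rcases le_total t₁ t₂ with h | h
    · exact key t₁ t₂ ht₁ ht₂ h
    · rw [abs_sub_comm, abs_sub_comm t₂ t₁]
      exact key t₂ t₁ ht₂ ht₁ h
  · -- (b1) time derivative a.e.
    have hD : ∀ᵐ t ∂ volume.restrict (Ioo (0:ℝ) 1), HasDerivAt B (b t) t :=
      ae_restrict_of_ae (ftc_ae hbmeas hbabs)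
    have hba' : ∀ᵐ t ∂ volume.restrict (Ioo (0:ℝ) 1), b t = a t :=
      ae_restrict_of_ae_restrict_of_subset (fun t ht => le_of_lt ht.1) hba
    filter_upwards [hD, hba', ae_restrict_mem measurableSet_Ioo] with t hDt ht_ba ht
    intro x
    have hrpow : HasDerivAt (fun s : ℝ => s ^ α) (α * t ^ (α - 1)) t :=
      Real.hasDerivAt_rpow_const (Or.inl ht.1.ne')
    have hexp : HasDerivAt (fun s => Real.exp (-B s)) (Real.exp (-B t) * -(b t)) t :=
      (hDt.neg).exp
    have h1 := (hrpow.mul hexp).mul_const (Real.sin x)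
    have heq : (fun s : ℝ => s ^ α * exU a s x)
        =ᶠ[𝓝 t] fun s => s ^ α * Real.exp (-B s) * Real.sin x := by
      filter_upwards [Ioo_mem_nhds ht.1 ht.2] with s hs
      simp only [exU]
      rw [hAB s (Ioo_subset_Icc_self hs)]; ring
    have h2 := h1.congr_of_eventuallyEq heq
    refine h2.congr_deriv ?_
    simp only [exU]
    rw [hAB t (Ioo_subset_Icc_self ht), ← ht_ba]
    ring
  · -- (b2) smoothness in x
    apply ae_of_all
    intro t
    have h1 : (fun x => (α * t ^ (α - 1) - t ^ α * a t) * exU a t x)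
        = fun x => ((α * t ^ (α - 1) - t ^ α * a t) * Real.exp (-exA a t)) * Real.sin x := by
      funext x; simp only [exU]; ring
    rw [h1]
    exact contDiff_const.mul Real.contDiff_sin
  · -- (b3) L² bound
    intro j
    set g : ℝ → ℝ := fun t => α ^ 2 * t ^ (2 * α - 2) + 2 * α * M * t ^ (α - 1) + M ^ 2 with hg
    have hgint : IntegrableOn g (Ioo (0:ℝ) 1) volume := by
      have i1 : IntegrableOn (fun t : ℝ => t ^ (2 * α - 2)) (Ioo (0:ℝ) 1) volume := by
        have h := intervalIntegral.intervalIntegrable_rpow' (a := 0) (b := 1)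
          (r := 2 * α - 2) (by linarith)
        rw [intervalIntegrable_iff, uIoc_of_le zero_le_one] at h
        exact h.mono_set Ioo_subset_Ioc_self
      have i2 : IntegrableOn (fun t : ℝ => t ^ (α - 1)) (Ioo (0:ℝ) 1) volume := by
        have h := intervalIntegral.intervalIntegrable_rpow' (a := 0) (b := 1)
          (r := α - 1) (by linarith)
        rw [intervalIntegrable_iff, uIoc_of_le zero_le_one] at h
        exact h.mono_set Ioo_subset_Ioc_self
      exact ((i1.const_mul _).add (i2.const_mul _)).add
        (integrableOn_const measure_Ioo_lt_top.ne)
    have hb3 : ∀ᵐ t ∂ volume.restrict (Ioo (0:ℝ) 1),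
        (⨆ x : ℝ, ENNReal.ofReal
            |deriv^[j] (fun y => (α * t ^ (α - 1) - t ^ α * a t) * exU a t y) x|) ^ 2
          ≤ ENNReal.ofReal (g t) := by
      have hae' : ∀ᵐ t ∂ volume.restrict (Ioo (0:ℝ) 1), ν ≤ a t ∧ a t ≤ M :=
        ae_restrict_of_ae_restrict_of_subset (fun t ht => le_of_lt ht.1) hae
      filter_upwards [hae', ae_restrict_mem measurableSet_Ioo] with t hta ht
      have hcb : |(α * t ^ (α - 1) - t ^ α * a t) * Real.exp (-exA a t)|
          ≤ α * t ^ (α - 1) + M := by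
        rw [abs_mul, Real.abs_exp]
        have hexp1 : Real.exp (-exA a t) ≤ 1 := by
          rw [hAB t (Ioo_subset_Icc_self ht)]
          exact Real.exp_le_one_iff.2 (by linarith [hBnonneg t ht.1.le])
        have h1 : |α * t ^ (α - 1) - t ^ α * a t| ≤ α * t ^ (α - 1) + M := by
          have htα : t ^ α ≤ 1 := Real.rpow_le_one ht.1.le ht.2.le hα0.le
          have h2 : |t ^ α * a t| ≤ M := by
            rw [abs_mul, abs_of_nonneg (Real.rpow_nonneg ht.1.le _),
              abs_of_nonneg (by linarith [hta.1])]
            calc t ^ α * a t ≤ 1 * M :=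
                  mul_le_mul htα hta.2 (by linarith [hta.1]) one_pos.le
              _ = M := one_mul M
          calc |α * t ^ (α - 1) - t ^ α * a t|
              ≤ |α * t ^ (α - 1)| + |t ^ α * a t| := abs_sub _ _
            _ ≤ α * t ^ (α - 1) + M := by
                rw [abs_of_nonneg (mul_nonneg hα0.le (Real.rpow_nonneg ht.1.le _))]
                linarith
        calc |α * t ^ (α - 1) - t ^ α * a t| * Real.exp (-exA a t)
            ≤ (α * t ^ (α - 1) + M) * 1 :=
              mul_le_mul h1 hexp1 (Real.exp_pos _).le
                (add_nonneg (mul_nonneg hα0.le (Real.rpow_nonneg ht.1.le _)) hM.le)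
          _ = α * t ^ (α - 1) + M := mul_one _
      have hsup : (⨆ x : ℝ, ENNReal.ofReal
            |deriv^[j] (fun y => (α * t ^ (α - 1) - t ^ α * a t) * exU a t y) x|)
          ≤ ENNReal.ofReal (α * t ^ (α - 1) + M) := by
        refine iSup_le fun x => ?_
        rw [hred]
        refine ENNReal.ofReal_le_ofReal ?_
        rw [abs_mul]
        calc |(α * t ^ (α - 1) - t ^ α * a t) * Real.exp (-exA a t)| * |deriv^[j] Real.sin x|
            ≤ |(α * t ^ (α - 1) - t ^ α * a t) * Real.exp (-exA a t)| * 1 :=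
              mul_le_mul_of_nonneg_left (sin_iter_bound j x) (abs_nonneg _)
          _ ≤ α * t ^ (α - 1) + M := by rw [mul_one]; exact hcb
      have hgt : (α * t ^ (α - 1) + M) ^ 2 = g t := by
        have he : t ^ (α - 1) * t ^ (α - 1) = t ^ (2 * α - 2) := by
          rw [← Real.rpow_add ht.1, show α - 1 + (α - 1) = 2 * α - 2 by ring]
        simp only [hg]
        rw [← he]; ring
      calc (⨆ x : ℝ, ENNReal.ofReal
            |deriv^[j] (fun y => (α * t ^ (α - 1) - t ^ α * a t) * exU a t y) x|) ^ 2
          ≤ (ENNReal.ofReal (α * t ^ (α - 1) + M)) ^ 2 := pow_le_pow_left₀ (zero_le') hsup 2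
        _ = ENNReal.ofReal ((α * t ^ (α - 1) + M) ^ 2) := by
            rw [← ENNReal.ofReal_pow
              (add_nonneg (mul_nonneg hα0.le (Real.rpow_nonneg ht.1.le _)) hM.le)]
        _ = ENNReal.ofReal (g t) := by rw [hgt]
    calc ∫⁻ t in Ioo (0:ℝ) 1,
          (⨆ x : ℝ, ENNReal.ofReal
            |deriv^[j] (fun y => (α * t ^ (α - 1) - t ^ α * a t) * exU a t y) x|) ^ 2
        ≤ ∫⁻ t in Ioo (0:ℝ) 1, ENNReal.ofReal (g t) := lintegral_mono_ae hb3
      _ < ⊤ := hgint.lintegral_lt_top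

end
end
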